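/- arXiv:2207.07613 — 6 statements merged into one kernel-verified Lean document; each statement's English description precedes it below -/
import Mathlib

section
/- Let C be a shortest odd hole of a graph G. If x is a major vertex for C (i.e., N_G(x) ∩ V(C) is not contained in any 2-edge path of C) but x has at most 3 neighbors on C, then x has exactly 3 neighbors on C and the set of neighbors of x on C induces exactly one edge of C. -/
open SimpleGraph

variable {V : Type*}

def IsHole (G : SimpleGraph V) {v : V} (C : G.Walk v v) : Prop :=
  C.IsCycle ∧ 4 ≤ C.length ∧
    ∀ x y : V, x ∈ C.support → y ∈ C.support → G.Adj x y → s(x, y) ∈ C.edges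

def IsShortestOddHole (G : SimpleGraph V) {v : V} (C : G.Walk v v) : Prop :=
  IsHole G C ∧ Odd C.length ∧
    ∀ (w : V) (D : G.Walk w w), IsHole G D → Odd D.length → C.length ≤ D.length

/-- `x` is a major vertex for the hole `C`: the neighbors of `x` on `C` are not all
contained in a single path of `C` with two edges. -/
def IsMajor (G : SimpleGraph V) {v : V} (C : G.Walk v v) (x : V) : Prop :=
  ¬ ∃ (a b : V) (Q : G.Walk a b), Q.IsPath ∧ Q.length = 2 ∧
      (∀ e ∈ Q.edges, e ∈ C.edges) ∧
      ∀ y, y ∈ C.support → G.Adj x y → y ∈ Q.support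

/-!
Index the hole `C` periodically by `ℕ`, with period `n = C.length`, and look at the positions of
the neighbours of `x`. If two cyclically consecutive neighbours are `m ≥ 2` apart, then `x`
together with the arc of `C` between them is a hole of length `m + 2`. When `m + 3 ≤ n` this
hole is shorter than `C`, so `m` is even; when `m + 3 > n`, all neighbours of `x` lie on the
complementary arc of at most two edges, and `x` is not major. The gaps add up to the odd number
`n`, so an odd number of them are equal to `1`. With at most three neighbours, this leaves
exactly three neighbours and exactly one gap equal to `1`, that is, exactly one edge of `C`.
-/

lemma Finset.exists_lt_of_card_eq_two {α : Type*} [LinearOrder α] {s : Finset α}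
    (h : s.card = 2) : ∃ a b, a < b ∧ s = {a, b} := by
  obtain ⟨a, b, hab, rfl⟩ := Finset.card_eq_two.mp h
  rcases hab.lt_or_gt with h | h
  · exact ⟨a, b, h, rfl⟩
  · exact ⟨b, a, h, Finset.pair_comm _ _⟩

lemma Finset.exists_lt_lt_of_card_eq_three {α : Type*} [LinearOrder α] {s : Finset α}
    (h : s.card = 3) : ∃ a b c, a < b ∧ b < c ∧ s = {a, b, c} := by
  set f := s.orderEmbOfFin h
  refine ⟨f 0, f 1, f 2, f.strictMono (by decide), f.strictMono (by decide), ?_⟩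
  ext y
  rw [← Finset.mem_coe, ← Finset.range_orderEmbOfFin s h, Set.mem_range]
  simp only [Fin.exists_fin_succ, Fin.exists_fin_zero, Finset.mem_insert, Finset.mem_singleton]
  grind

section PeriodicGaps

/- `P` marks the positions of the neighbours of a vertex on a cycle of length `n`; `hspread`
says that they do not all lie among three consecutive positions. -/
variable {n : ℕ} {P : ℕ → Prop} (hper : Function.Periodic P n)
  (hspread : ∀ c, ∃ i, c + 3 ≤ i ∧ i < c + n ∧ P i)
  (heven : ∀ a m, 2 ≤ m → m + 3 ≤ n → P a → P (a + m) →
    (∀ i, 0 < i → i < m → ¬ P (a + i)) → Even m)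
include hper hspread heven

lemma eq_one_or_even_of_gap {a m : ℕ} (ha : P a) (hm : P (a + m)) (hpos : 0 < m)
    (hgap : ∀ i, 0 < i → i < m → ¬ P (a + i)) : m = 1 ∨ Even m := by
  by_cases hm1 : m = 1
  · exact .inl hm1
  by_cases hlong : m + 3 ≤ n
  · exact .inr (heven a m (by omega) hlong ha hm hgap)
  obtain ⟨i, hi, hin, hPi⟩ := hspread (a + m)
  refine absurd ?_ (hgap (i - n - a) (by omega) (by omega))
  rwa [show a + (i - n - a) = i - n by omega, ← hper, Nat.sub_add_cancel (by omega)]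

lemma card_filter_eq_three_and_existsUnique [DecidablePred P] (hn : 4 ≤ n) (hodd : Odd n)
    (hcard : ((Finset.range n).filter P).card ≤ 3) :
    ((Finset.range n).filter P).card = 3 ∧ ∃! k, k < n ∧ P k ∧ P (k + 1) := by
  set T := (Finset.range n).filter P
  have hT : ∀ i ∈ T, i < n ∧ P i := by simp [T]
  have hP : ∀ i < 2 * n, P i ↔ (i < n ∧ i ∈ T) ∨ (n ≤ i ∧ i - n ∈ T) := by
    intro i hi
    rcases lt_or_ge i n with h | h
    · simp [T, h]
    · obtain ⟨j, rfl⟩ : ∃ j, i = j + n := ⟨i - n, by omega⟩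
      simp [T, hper j]
      omega
  have hconsec {a b : ℕ} (hab : a < b) (hb2 : b < 2 * n) (ha : P a) (hb : P b)
      (hgap : ∀ i, a < i → i < b → ¬ ((i < n ∧ i ∈ T) ∨ (n ≤ i ∧ i - n ∈ T))) :
      b - a = 1 ∨ (b - a) % 2 = 0 := by
    rw [← Nat.even_iff]
    refine eq_one_or_even_of_gap hper hspread heven ha (by rwa [Nat.add_sub_cancel' hab.le])
      (by omega) fun i h0 hi hPi => hgap (a + i) (by omega) (by omega) ((hP _ (by omega)).mp hPi)
  rw [Nat.odd_iff] at hodd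
  obtain hc | hc | hc | hc : T.card = 0 ∨ T.card = 1 ∨ T.card = 2 ∨ T.card = 3 := by omega
  · obtain ⟨i, -, hin, hPi⟩ := hspread 0
    have hi : i ∈ T := Finset.mem_filter.mpr ⟨Finset.mem_range.mpr (by omega), hPi⟩
    simp [Finset.card_eq_zero.mp hc] at hi
  · obtain ⟨p, hTp⟩ := Finset.card_eq_one.mp hc
    simp only [hTp, Finset.mem_singleton, forall_eq] at hP hT hconsec
    have := hconsec (a := p) (b := p + n) (by omega) (by omega) hT.2 ((hper p).mpr hT.2)
      fun _ _ _ => by omega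
    omega
  · obtain ⟨p, q, hpq, hTpq⟩ := Finset.exists_lt_of_card_eq_two hc
    simp only [hTpq, Finset.mem_insert, Finset.mem_singleton, forall_eq_or_imp, forall_eq]
      at hP hT hconsec
    have h1 := hconsec hpq (by omega) hT.1.2 hT.2.2 fun _ _ _ => by omega
    have h2 := hconsec (a := q) (b := p + n) (by omega) (by omega) hT.2.2 ((hper p).mpr hT.1.2)
      fun _ _ _ => by omega
    -- exactly one gap is `1`; the three positions starting at its left end contain both points
    obtain ⟨i, hi, hin, hPi⟩ := hspread (if q = p + 1 then p else q)
    have := (hP i (by split_ifs at hin <;> omega)).mp hPi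
    split_ifs at hi hin <;> omega
  · obtain ⟨p, q, r, hpq, hqr, hTpqr⟩ := Finset.exists_lt_lt_of_card_eq_three hc
    simp only [hTpqr, Finset.mem_insert, Finset.mem_singleton, forall_eq_or_imp, forall_eq]
      at hP hT hconsec
    have h1 := hconsec hpq (by omega) hT.1.2 hT.2.1.2 fun _ _ _ => by omega
    have h2 := hconsec hqr (by omega) hT.2.1.2 hT.2.2.2 fun _ _ _ => by omega
    have h3 := hconsec (a := r) (b := p + n) (by omega) (by omega) hT.2.2.2 ((hper p).mpr hT.1.2)
      fun _ _ _ => by omega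
    refine ⟨hc, if q = p + 1 then p else if r = q + 1 then q else r, ?_, ?_⟩
    · split_ifs <;>
        exact ⟨by omega, (hP _ (by omega)).mpr (by omega), (hP _ (by omega)).mpr (by omega)⟩
    · rintro k ⟨hk, hk0, hk1⟩
      have := (hP _ (by omega)).mp hk0
      have := (hP _ (by omega)).mp hk1
      split_ifs <;> omega

end PeriodicGaps

namespace SimpleGraph.Walk

variable {G : SimpleGraph V}

section OfSeq

variable (f : ℕ → V) (hf : ∀ i, G.Adj (f i) (f (i + 1))) (a : ℕ)

def ofSeq : (m : ℕ) → G.Walk (f a) (f (a + m))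
  | 0 => nil
  | m + 1 => (ofSeq m).concat (hf (a + m))

@[simp]
lemma length_ofSeq (m : ℕ) : (ofSeq f hf a m).length = m := by
  induction m with
  | zero => rfl
  | succ m ih => rw [ofSeq, length_concat, ih]

lemma getVert_ofSeq {m i : ℕ} (h : i ≤ m) : (ofSeq f hf a m).getVert i = f (a + i) := by
  induction m with
  | zero =>
    obtain rfl : i = 0 := by omega
    exact getVert_zero _
  | succ m ih =>
    rw [ofSeq, concat_eq_append, getVert_append, length_ofSeq]
    split_ifs with him
    · exact ih (by omega)
    · obtain rfl | rfl : i = m ∨ i = m + 1 := by omega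
      all_goals simp

lemma mem_support_ofSeq_iff {m : ℕ} {y : V} :
    y ∈ (ofSeq f hf a m).support ↔ ∃ i ≤ m, f (a + i) = y := by
  rw [mem_support_iff_exists_getVert, length_ofSeq]
  constructor
  · rintro ⟨i, rfl, hi⟩
    exact ⟨i, hi, (getVert_ofSeq f hf a hi).symm⟩
  · rintro ⟨i, hi, rfl⟩
    exact ⟨i, getVert_ofSeq f hf a hi, hi⟩

lemma mem_edges_ofSeq_iff {m : ℕ} {e : Sym2 V} :
    e ∈ (ofSeq f hf a m).edges ↔ ∃ i < m, s(f (a + i), f (a + i + 1)) = e := by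
  induction e using Sym2.ind with
  | _ y z =>
    rw [mk_mem_edges_iff_exists, length_ofSeq]
    refine exists_congr fun i => and_congr_right fun hi => ?_
    rw [getVert_ofSeq f hf a hi.le, getVert_ofSeq f hf a hi, add_assoc]

lemma isPath_ofSeq {m : ℕ} (hinj : ∀ i ≤ m, ∀ j ≤ m, f (a + i) = f (a + j) → i = j) :
    (ofSeq f hf a m).IsPath := by
  rw [← IsPath.getVert_injOn_iff]
  intro i hi j hj hij
  simp only [Set.mem_ofPred_eq, length_ofSeq] at hi hj
  rw [getVert_ofSeq f hf a hi, getVert_ofSeq f hf a hj] at hij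
  exact hinj i hi j hj hij

end OfSeq

section CycleVert

variable {v : V} (C : G.Walk v v)

def getCycleVert (i : ℕ) : V := C.getVert (i % C.length)

lemma getCycleVert_eq_of_modEq {i j : ℕ} (h : i ≡ j [MOD C.length]) :
    C.getCycleVert i = C.getCycleVert j :=
  congrArg C.getVert h

lemma getCycleVert_periodic : Function.Periodic C.getCycleVert C.length :=
  fun i => C.getCycleVert_eq_of_modEq (Nat.add_mod_right i _)

lemma getCycleVert_of_le {i : ℕ} (h : i ≤ C.length) : C.getCycleVert i = C.getVert i := by
  rcases h.lt_or_eq with h | rfl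
  · rw [getCycleVert, Nat.mod_eq_of_lt h]
  · rw [getCycleVert, Nat.mod_self, getVert_zero, getVert_length]

lemma getCycleVert_mem_support (i : ℕ) : C.getCycleVert i ∈ C.support :=
  C.getVert_mem_support _

lemma adj_getCycleVert_succ (hC : 0 < C.length) (i : ℕ) :
    G.Adj (C.getCycleVert i) (C.getCycleVert (i + 1)) := by
  have hi := Nat.mod_lt i hC
  rw [C.getCycleVert_eq_of_modEq (Nat.mod_modEq i _).symm,
    C.getCycleVert_eq_of_modEq ((Nat.mod_modEq i _).add_right 1).symm,
    getCycleVert_of_le _ hi.le, getCycleVert_of_le _ hi]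
  exact C.adj_getVert_succ hi

lemma exists_getCycleVert_eq (hC : 0 < C.length) (c k : ℕ) :
    ∃ i, c ≤ i ∧ i < c + C.length ∧ C.getCycleVert i = C.getCycleVert k := by
  set n := C.length
  have hr := Nat.mod_lt (k + n * c - c) hC
  refine ⟨c + (k + n * c - c) % n, by omega, by omega, C.getCycleVert_eq_of_modEq ?_⟩
  have : c ≤ n * c := Nat.le_mul_of_pos_left c hC
  calc c + (k + n * c - c) % n ≡ c + (k + n * c - c) [MOD n] := (Nat.mod_modEq _ _).add_left c
    _ = k + n * c := by omega
    _ ≡ k [MOD n] := Nat.add_mul_mod_self_left k n c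

lemma mem_support_iff_exists_getCycleVert (hC : 0 < C.length) {y : V} :
    y ∈ C.support ↔ ∃ i < C.length, C.getCycleVert i = y := by
  rw [mem_support_iff_exists_getVert]
  constructor
  · rintro ⟨k, rfl, hk⟩
    obtain ⟨i, -, hi, hik⟩ := C.exists_getCycleVert_eq hC 0 k
    exact ⟨i, by omega, by rw [hik, getCycleVert_of_le _ hk]⟩
  · rintro ⟨i, hi, rfl⟩
    exact ⟨i, (getCycleVert_of_le _ hi.le).symm, hi.le⟩

lemma mem_edges_iff_exists_getCycleVert {e : Sym2 V} :
    e ∈ C.edges ↔ ∃ i < C.length, s(C.getCycleVert i, C.getCycleVert (i + 1)) = e := by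
  induction e using Sym2.ind with
  | _ y z =>
    rw [mk_mem_edges_iff_exists]
    refine exists_congr fun i => and_congr_right fun hi => ?_
    rw [getCycleVert_of_le _ hi.le, getCycleVert_of_le _ hi]

lemma getCycleVert_mk_mem_edges (hC : 0 < C.length) (i : ℕ) :
    s(C.getCycleVert i, C.getCycleVert (i + 1)) ∈ C.edges := by
  refine C.mem_edges_iff_exists_getCycleVert.mpr ⟨i % C.length, Nat.mod_lt i hC, ?_⟩
  rw [C.getCycleVert_eq_of_modEq (Nat.mod_modEq i _),
    C.getCycleVert_eq_of_modEq ((Nat.mod_modEq i _).add_right 1)]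

lemma existsUnique_mem_edges {Q : V → Prop}
    (h : ∃! k, k < C.length ∧ Q (C.getCycleVert k) ∧ Q (C.getCycleVert (k + 1))) :
    ∃! e : Sym2 V, e ∈ C.edges ∧ ∀ y ∈ e, Q y := by
  obtain ⟨k, ⟨hk, hk0, hk1⟩, huniq⟩ := h
  refine ⟨_, ⟨C.mem_edges_iff_exists_getCycleVert.mpr ⟨k, hk, rfl⟩, ?_⟩, ?_⟩
  · simp only [Sym2.mem_iff]
    rintro y (rfl | rfl)
    exacts [hk0, hk1]
  · rintro e ⟨he, hQ⟩
    obtain ⟨i, hi, rfl⟩ := C.mem_edges_iff_exists_getCycleVert.mp he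
    rw [huniq i ⟨hi, hQ _ (Sym2.mem_mk_left _ _), hQ _ (Sym2.mem_mk_right _ _)⟩]

variable {C}

lemma IsCycle.getCycleVert_eq_iff (hC : C.IsCycle) {i j : ℕ} :
    C.getCycleVert i = C.getCycleVert j ↔ i ≡ j [MOD C.length] := by
  have hn : 0 < C.length := by have := hC.three_le_length; omega
  refine ⟨fun h => hC.getVert_injOn' ?_ ?_ h, C.getCycleVert_eq_of_modEq⟩ <;>
    simp only [Set.mem_ofPred_eq]
  · have := Nat.mod_lt i hn; omega
  · have := Nat.mod_lt j hn; omega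

lemma IsCycle.eq_of_getCycleVert_eq (hC : C.IsCycle) {i j : ℕ} (hij : i ≤ j)
    (hj : j < i + C.length) (h : C.getCycleVert i = C.getCycleVert j) : i = j :=
  (hC.getCycleVert_eq_iff.mp h).eq_of_abs_lt (by rw [abs_lt]; omega)

lemma IsCycle.isPath_ofSeq_getCycleVert (hC : C.IsCycle)
    (hf : ∀ i, G.Adj (C.getCycleVert i) (C.getCycleVert (i + 1))) (a : ℕ) {m : ℕ}
    (hm : m < C.length) : (ofSeq C.getCycleVert hf a m).IsPath :=
  isPath_ofSeq _ _ _ fun i hi j hj h => by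
    rcases le_total i j with hle | hle
    · have := hC.eq_of_getCycleVert_eq (by omega) (by omega) h
      omega
    · have := hC.eq_of_getCycleVert_eq (by omega) (by omega) h.symm
      omega

lemma IsCycle.ncard_setOf_mem_support (hC : C.IsCycle) (Q : V → Prop) [DecidablePred Q] :
    {y | y ∈ C.support ∧ Q y}.ncard =
      ((Finset.range C.length).filter fun i => Q (C.getCycleVert i)).card := by
  have hn : 0 < C.length := by have := hC.three_le_length; omega
  have himage : {y | y ∈ C.support ∧ Q y} =
      C.getCycleVert '' ↑((Finset.range C.length).filter fun i => Q (C.getCycleVert i)) := by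
    ext y
    simp only [Set.mem_ofPred_eq, C.mem_support_iff_exists_getCycleVert hn, Finset.coe_filter,
      Finset.mem_range, Set.mem_image]
    constructor
    · rintro ⟨⟨i, hi, rfl⟩, hQ⟩
      exact ⟨i, ⟨hi, hQ⟩, rfl⟩
    · rintro ⟨i, ⟨hi, hQ⟩, rfl⟩
      exact ⟨⟨i, hi, rfl⟩, hQ⟩
  rw [himage, Set.InjOn.ncard_image, Set.ncard_coe_finset]
  intro i hi j hj h
  simp only [Finset.coe_filter, Finset.mem_range, Set.mem_ofPred_eq] at hi hj
  exact (hC.getCycleVert_eq_iff.mp h).eq_of_lt_of_lt hi.1 hj.1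

lemma IsCycle.not_isMajor_of_forall_adj {x : V} (hC : C.IsCycle) (c : ℕ)
    (h : ∀ y ∈ C.support, G.Adj x y → ∃ t ≤ 2, C.getCycleVert (c + t) = y) :
    ¬ IsMajor G C x := by
  have hn := hC.three_le_length
  have hf := C.adj_getCycleVert_succ (by omega)
  refine not_not_intro ⟨_, _, ofSeq C.getCycleVert hf c 2,
    hC.isPath_ofSeq_getCycleVert hf c (by omega), length_ofSeq .., fun e he => ?_,
    fun y hy hxy => (mem_support_ofSeq_iff ..).mpr (h y hy hxy)⟩
  obtain ⟨i, -, rfl⟩ := (mem_edges_ofSeq_iff ..).mp he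
  exact C.getCycleVert_mk_mem_edges (by omega) _

end CycleVert

end SimpleGraph.Walk

open SimpleGraph.Walk

variable {G : SimpleGraph V} {v x : V} {C : G.Walk v v}

lemma IsHole.eq_add_one_of_adj (hC : IsHole G C) {i j : ℕ} (hij : i < j) (hj : j < i + C.length)
    (h : G.Adj (C.getCycleVert i) (C.getCycleVert j)) : j = i + 1 ∨ j + 1 = i + C.length := by
  obtain ⟨k, -, he⟩ := C.mem_edges_iff_exists_getCycleVert.mp
    (hC.2.2 _ _ (C.getCycleVert_mem_support i) (C.getCycleVert_mem_support j) h)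
  simp only [Sym2.eq_iff, hC.1.getCycleVert_eq_iff] at he
  rcases he with ⟨hki, hkj⟩ | ⟨hkj, hki⟩
  · have : i + 1 ≡ j [MOD C.length] := (hki.symm.add_right 1).trans hkj
    exact .inl (this.eq_of_abs_lt (by rw [abs_lt]; omega)).symm
  · have : j + 1 ≡ i + C.length [MOD C.length] :=
      ((hkj.symm.add_right 1).trans hki).trans (Nat.add_mod_right i _).symm
    exact .inr (this.eq_of_abs_lt (by rw [abs_lt]; omega))

lemma IsHole.mem_edges_ofSeq_of_adj (hC : IsHole G C)
    (hf : ∀ i, G.Adj (C.getCycleVert i) (C.getCycleVert (i + 1))) (a : ℕ) {m : ℕ}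
    (hm : m + 2 ≤ C.length) {y z : V} (hy : y ∈ (ofSeq C.getCycleVert hf a m).support)
    (hz : z ∈ (ofSeq C.getCycleVert hf a m).support) (h : G.Adj y z) :
    s(y, z) ∈ (ofSeq C.getCycleVert hf a m).edges := by
  have hchord {i j : ℕ} (hij : i < j) (hj : j ≤ m)
      (h : G.Adj (C.getCycleVert (a + i)) (C.getCycleVert (a + j))) :
      s(C.getCycleVert (a + i), C.getCycleVert (a + j)) ∈ (ofSeq C.getCycleVert hf a m).edges := by
    obtain rfl : j = i + 1 := by
      have := hC.eq_add_one_of_adj (i := a + i) (j := a + j) (by omega) (by omega) h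
      omega
    exact (mem_edges_ofSeq_iff ..).mpr ⟨i, by omega, rfl⟩
  obtain ⟨i, hi, rfl⟩ := (mem_support_ofSeq_iff ..).mp hy
  obtain ⟨j, hj, rfl⟩ := (mem_support_ofSeq_iff ..).mp hz
  rcases lt_trichotomy i j with hij | rfl | hij
  · exact hchord hij hj h
  · exact absurd rfl h.ne
  · rw [Sym2.eq_swap]
    exact hchord hij hi h.symm

lemma IsMajor.exists_adj_getCycleVert (hmaj : IsMajor G C x) (hC : C.IsCycle) (c : ℕ) :
    ∃ i, c + 3 ≤ i ∧ i < c + C.length ∧ G.Adj x (C.getCycleVert i) := by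
  have hn : 0 < C.length := by have := hC.three_le_length; omega
  by_contra! hfar
  refine hC.not_isMajor_of_forall_adj c (fun y hy hxy => ?_) hmaj
  obtain ⟨k, -, rfl⟩ := (C.mem_support_iff_exists_getCycleVert hn).mp hy
  obtain ⟨i, hci, hin, hik⟩ := C.exists_getCycleVert_eq hn c k
  rw [← hik] at hxy ⊢
  refine ⟨i - c, ?_, by rw [Nat.add_sub_cancel' hci]⟩
  by_contra
  exact hfar i (by omega) hin hxy

lemma IsHole.not_isMajor_of_mem_support (hC : IsHole G C) (hx : x ∈ C.support) :
    ¬ IsMajor G C x := by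
  have hn : 0 < C.length := by have := hC.2.1; omega
  obtain ⟨c, -, rfl⟩ := (C.mem_support_iff_exists_getCycleVert hn).mp hx
  refine hC.1.not_isMajor_of_forall_adj (c + C.length - 1) fun y hy hxy => ?_
  obtain ⟨k, -, rfl⟩ := (C.mem_support_iff_exists_getCycleVert hn).mp hy
  obtain ⟨i, hci, hin, hik⟩ := C.exists_getCycleVert_eq hn c k
  rw [← hik] at hxy ⊢
  have hci' : c ≠ i := by rintro rfl; exact hxy.ne rfl
  rcases hC.eq_add_one_of_adj (by omega) hin hxy with rfl | h
  · exact ⟨2, le_rfl, by rw [show c + C.length - 1 + 2 = c + 1 + C.length by omega,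
      C.getCycleVert_periodic]⟩
  · exact ⟨0, by omega, by rw [show c + C.length - 1 + 0 = i by omega]⟩

lemma isHole_cons_concat {u w : V} {p : G.Walk u w} (hp : p.IsPath) (hlen : 2 ≤ p.length)
    (hind : ∀ y ∈ p.support, ∀ z ∈ p.support, G.Adj y z → s(y, z) ∈ p.edges)
    (hx : x ∉ p.support) (hxu : G.Adj x u) (hwx : G.Adj w x)
    (hnbr : ∀ y ∈ p.support, G.Adj x y → y = u ∨ y = w) :
    IsHole G (cons hxu (p.concat hwx)) := by
  have huw : u ≠ w := by
    rintro rfl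
    have := length_eq_zero_iff.mpr (isPath_iff_nil.mp hp)
    omega
  refine ⟨(cons_isCycle_iff _ _).mpr ⟨hp.concat hx hwx, ?_⟩, by simp; omega, ?_⟩
  · rw [edges_concat, List.concat_eq_append, List.mem_append, List.mem_singleton, not_or]
    refine ⟨fun h => hx (p.fst_mem_support_of_mem_edges h), fun h => ?_⟩
    rcases Sym2.eq_iff.mp h with ⟨rfl, -⟩ | ⟨-, h⟩
    · exact hwx.ne rfl
    · exact huw h
  · simp only [support_cons, support_concat, edges_cons, edges_concat, List.concat_eq_append,
      List.mem_cons, List.mem_append, List.not_mem_nil, or_false]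
    intro y z hy hz hyz
    replace hy : y = x ∨ y ∈ p.support := by tauto
    replace hz : z = x ∨ z ∈ p.support := by tauto
    rcases hy with rfl | hy <;> rcases hz with hz | hz
    · exact absurd hz.symm hyz.ne
    · rcases hnbr z hz hyz with rfl | rfl <;> simp [Sym2.eq_swap]
    · subst hz
      rcases hnbr y hy hyz.symm with rfl | rfl <;> simp [Sym2.eq_swap]
    · exact .inr (.inl (hind y hy z hz hyz))

lemma IsShortestOddHole.even_of_gap (hC : IsShortestOddHole G C) (hx : x ∉ C.support)
    {a m : ℕ} (hm : 2 ≤ m) (hmn : m + 3 ≤ C.length) (ha : G.Adj x (C.getCycleVert a))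
    (ham : G.Adj x (C.getCycleVert (a + m)))
    (hgap : ∀ i, 0 < i → i < m → ¬ G.Adj x (C.getCycleVert (a + i))) : Even m := by
  obtain ⟨hhole, -, hmin⟩ := hC
  have hf := C.adj_getCycleVert_succ (by omega)
  set p := ofSeq C.getCycleVert hf a m
  have hD : IsHole G (cons ha (p.concat ham.symm)) := by
    refine isHole_cons_concat (hhole.1.isPath_ofSeq_getCycleVert hf a (by omega))
      (by simp; omega) (fun _ hy _ hz h => hhole.mem_edges_ofSeq_of_adj hf a (by omega) hy hz h)
      (fun h => ?_) ha ham.symm fun y hy h => ?_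
    · obtain ⟨i, -, hi⟩ := (mem_support_ofSeq_iff ..).mp h
      exact hx (hi ▸ C.getCycleVert_mem_support _)
    · obtain ⟨i, hi, rfl⟩ := (mem_support_ofSeq_iff ..).mp hy
      obtain rfl | rfl : i = 0 ∨ i = m := by
        by_contra! hi'
        exact hgap i (by omega) (by omega) h
      exacts [.inl rfl, .inr rfl]
  have hlen : (cons ha (p.concat ham.symm)).length = m + 2 := by simp [p]
  by_contra hodd
  have := hmin _ _ hD (hlen ▸ (Nat.not_even_iff_odd.mp hodd).add_even even_two)
  omega

/-- A major vertex with at most 3 neighbors on a shortest odd hole `C` has exactly 3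
neighbors on `C`, and the neighbors of `x` on `C` induce exactly one edge of `C`. -/
theorem stmt1 (G : SimpleGraph V) {v : V} (C : G.Walk v v)
    (hC : IsShortestOddHole G C) (x : V) (hmaj : IsMajor G C x)
    (hcard : {y | y ∈ C.support ∧ G.Adj x y}.ncard ≤ 3) :
    {y | y ∈ C.support ∧ G.Adj x y}.ncard = 3 ∧
      ∃! e : Sym2 V, e ∈ C.edges ∧ ∀ y ∈ e, G.Adj x y := by
  classical
  have hhole := hC.1
  have hx : x ∉ C.support := fun h => hhole.not_isMajor_of_mem_support h hmaj
  rw [hhole.1.ncard_setOf_mem_support] at hcard ⊢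
  obtain ⟨hthree, huniq⟩ := card_filter_eq_three_and_existsUnique
    (C.getCycleVert_periodic.comp (G.Adj x)) (hmaj.exists_adj_getCycleVert hhole.1)
    (fun _ _ => hC.even_of_gap hx) hhole.2.1 hC.2.1 hcard
  exact ⟨hthree, C.existsUnique_mem_edges huniq⟩
end

section
/- Let C be a cycle, X a finite set, and for each edge e of C let X(e) ⊆ X be given. For Y ⊆ X let E_Y be the set of edges e of C with Y ⊆ X(e). If |E_Y| is odd for every nonempty proper subset Y of X and |E_X| is even, then the total number of edges e of C with X(e) ≠ ∅ is even. -/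
open SimpleGraph

private lemma even_iff_zmod (n : ℕ) : Even n ↔ (n : ZMod 2) = 0 := by
  rw [even_iff_two_dvd]
  exact (ZMod.natCast_eq_zero_iff n 2).symm

private lemma odd_zmod (n : ℕ) (h : Odd n) : (n : ZMod 2) = 1 := by
  obtain ⟨k, rfl⟩ := h
  push_cast
  have h2 : (2 : ZMod 2) = 0 := by decide
  rw [h2]
  ring

private lemma two_pow_zmod (n : ℕ) (hn : n ≠ 0) : ((2 ^ n : ℕ) : ZMod 2) = 0 := by
  push_cast
  have h2 : (2 : ZMod 2) = 0 := by decide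
  rw [h2, zero_pow hn]

/-- Counting core of Lemma 2.9: if `|E_Y|` is odd for every nonempty proper `Y ⊆ X`
and `|E_X|` is even, then the number of edges `e` of the cycle `C` with `X(e) ≠ ∅`
is even. -/
theorem stmt3 {V : Type*} [DecidableEq V] {X : Type*} [Fintype X] [DecidableEq X]
    (G : SimpleGraph V) {v : V} (C : G.Walk v v) (hC : C.IsCycle)
    (f : Sym2 V → Finset X)
    (hodd : ∀ Y : Finset X, Y.Nonempty → Y ≠ Finset.univ →
      Odd (C.edges.toFinset.filter fun e => Y ⊆ f e).card)
    (heven : Even (C.edges.toFinset.filter fun e => (Finset.univ : Finset X) ⊆ f e).card) :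
    Even (C.edges.toFinset.filter fun e => (f e).Nonempty).card := by
  classical
  set E := C.edges.toFinset with hE
  by_cases hX : (Finset.univ : Finset X).Nonempty
  swap
  · -- X empty: every f e = ∅
    rw [Finset.not_nonempty_iff_eq_empty] at hX
    have : ∀ e, f e = ∅ := fun e => Finset.subset_empty.mp (hX ▸ Finset.subset_univ _)
    simp [this]
  -- main case
  set 𝒴 : Finset (Finset X) :=
    Finset.univ.powerset.filter (fun Y : Finset X => Y.Nonempty) with h𝒴
  have key : ∑ Y ∈ 𝒴, (E.filter fun e => Y ⊆ f e).card
      = ∑ e ∈ E, ((f e).powerset.filter (fun Y => Y.Nonempty)).card := by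
    simp only [Finset.card_filter]
    rw [Finset.sum_comm]
    refine Finset.sum_congr rfl fun e _ => ?_
    rw [← Finset.card_filter, ← Finset.card_filter]
    congr 1
    ext Y
    simp only [h𝒴, Finset.mem_filter, Finset.mem_powerset, Finset.subset_univ, true_and]
    tauto
  have hcard : ∀ e, ((f e).powerset.filter (fun Y => Y.Nonempty)).card
      = 2 ^ (f e).card - 1 := by
    intro e
    have : (f e).powerset.filter (fun Y => Y.Nonempty) = (f e).powerset.erase ∅ := by
      ext Y
      simp [Finset.mem_erase, Finset.nonempty_iff_ne_empty, and_comm]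
    rw [this, Finset.card_erase_of_mem (Finset.empty_mem_powerset _), Finset.card_powerset]
  rw [even_iff_zmod] at heven ⊢
  have hL : ((∑ Y ∈ 𝒴, (E.filter fun e => Y ⊆ f e).card : ℕ) : ZMod 2) = 0 := by
    have hsplit : 𝒴 = insert (Finset.univ : Finset X) (𝒴.erase Finset.univ) := by
      rw [Finset.insert_erase]
      simp [h𝒴, hX]
    rw [hsplit, Finset.sum_insert (Finset.notMem_erase _ _)]
    push_cast
    rw [heven, zero_add]
    have hone : ∀ Y ∈ 𝒴.erase Finset.univ,
        (((E.filter fun e => Y ⊆ f e).card : ℕ) : ZMod 2) = 1 := by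
      intro Y hY
      simp only [Finset.mem_erase, h𝒴, Finset.mem_filter] at hY
      exact odd_zmod _ (hodd Y hY.2.2 hY.1)
    rw [Finset.sum_congr rfl hone, Finset.sum_const, nsmul_eq_mul, mul_one]
    have hYc : (𝒴.erase Finset.univ).card = 2 ^ Fintype.card X - 2 := by
      have h1 : 𝒴.card = 2 ^ Fintype.card X - 1 := by
        have : 𝒴 = Finset.univ.powerset.erase ∅ := by
          ext Y
          simp [h𝒴, Finset.nonempty_iff_ne_empty, and_comm]
        rw [this, Finset.card_erase_of_mem (Finset.empty_mem_powerset _),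
          Finset.card_powerset, Finset.card_univ]
      rw [Finset.card_erase_of_mem (by simp [h𝒴, hX]), h1]
      omega
    rw [hYc]
    have hn : 1 ≤ Fintype.card X := Fintype.card_pos_iff.mpr ⟨hX.choose⟩
    have h2 : 2 ≤ 2 ^ Fintype.card X := by
      calc (2:ℕ) = 2 ^ 1 := (pow_one 2).symm
      _ ≤ 2 ^ Fintype.card X := Nat.pow_le_pow_right (by norm_num) hn
    rw [Nat.cast_sub h2, two_pow_zmod _ (by omega)]
    have : ((2 : ℕ) : ZMod 2) = 0 := by decide
    rw [this, sub_zero]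
  -- right side parity
  have hR : ((∑ Y ∈ 𝒴, (E.filter fun e => Y ⊆ f e).card : ℕ) : ZMod 2)
      = ((E.filter fun e => (f e).Nonempty).card : ZMod 2) := by
    rw [key]
    push_cast
    rw [Finset.card_filter]
    push_cast
    refine Finset.sum_congr rfl fun e _ => ?_
    rw [hcard e]
    by_cases h : (f e).Nonempty
    · have hk : (f e).card ≠ 0 := by
        have := Finset.card_pos.mpr h; omega
      have h2 : 1 ≤ 2 ^ (f e).card := Nat.one_le_two_pow
      rw [Nat.cast_sub h2, two_pow_zmod _ hk]
      simp [h]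
    · rw [Finset.not_nonempty_iff_eq_empty] at h
      simp [h]
  rw [← hR, hL]
end

section
/- Let G be a graph. If G is non-deep, then every induced subgraph H of G containing a shortest odd hole of G is also non-deep. -/
open SimpleGraph

variable {V : Type*}

/-- Conditions Z for the triple of paths `(T₁, T₂, T₃)` from `a` to `b₁`, `b₂`, `b₃`. -/
def ConditionsZ (G : SimpleGraph V) (a b₁ b₂ b₃ : V)
    (T₁ : G.Walk a b₁) (T₂ : G.Walk a b₂) (T₃ : G.Walk a b₃) : Prop :=
  T₁.IsPath ∧ T₂.IsPath ∧ T₃.IsPath ∧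
  T₁.length < T₂.length ∧ T₂.length ≤ T₃.length ∧
  -- Z1: `{b₁, b₂, b₃}` induces a triangle of `G`
  b₁ ≠ b₂ ∧ b₁ ≠ b₃ ∧ b₂ ≠ b₃ ∧ G.Adj b₁ b₂ ∧ G.Adj b₁ b₃ ∧ G.Adj b₂ b₃ ∧
  -- Z2/Z3: `T₁ ∪ T₂ ∪ T₃` is an induced tree of `G ∖ E(G[{b₁,b₂,b₃}])`
  -- with leaf set `{b₁, b₂, b₃}` and `a` its only degree-3 vertex
  (∀ z, z ∈ T₁.support → z ∈ T₂.support → z = a) ∧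
  (∀ z, z ∈ T₁.support → z ∈ T₃.support → z = a) ∧
  (∀ z, z ∈ T₂.support → z ∈ T₃.support → z = a) ∧
  (∀ p q, (p ∈ T₁.support ∨ p ∈ T₂.support ∨ p ∈ T₃.support) →
      (q ∈ T₁.support ∨ q ∈ T₂.support ∨ q ∈ T₃.support) → G.Adj p q →
      (s(p, q) ∈ T₁.edges ∨ s(p, q) ∈ T₂.edges ∨ s(p, q) ∈ T₃.edges ∨
        s(p, q) = s(b₁, b₂) ∨ s(p, q) = s(b₁, b₃) ∨ s(p, q) = s(b₂, b₃))) ∧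
  -- Z4: `G[T₂ ∪ T₃]` is a shortest odd hole of `G`
  (∃ D : G.Walk b₂ b₂, IsShortestOddHole G D ∧
      {z | z ∈ D.support} = {z | z ∈ T₂.support} ∪ {z | z ∈ T₃.support})

/-- `G` is deep: it contains a triple satisfying Conditions Z (hence a tripod). -/
def IsDeep (G : SimpleGraph V) : Prop :=
  ∃ (a b₁ b₂ b₃ : V) (T₁ : G.Walk a b₁) (T₂ : G.Walk a b₂) (T₃ : G.Walk a b₃),
    ConditionsZ G a b₁ b₂ b₃ T₁ T₂ T₃

/-- Lift a walk of `G` whose support lies in `S` to a walk of `G.induce S`. -/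
def liftWalk {G : SimpleGraph V} {S : Set V} :
    ∀ {u w : V} (p : G.Walk u w) (h : ∀ z ∈ p.support, z ∈ S),
      (G.induce S).Walk ⟨u, h u p.start_mem_support⟩ ⟨w, h w p.end_mem_support⟩
  | _, _, Walk.nil, _ => Walk.nil
  | _, _, Walk.cons ha p, h =>
      Walk.cons (by exact ha)
        (liftWalk p (fun z hz => h z (by simp [Walk.support_cons, hz])))

theorem liftWalk_map {G : SimpleGraph V} {S : Set V} :
    ∀ {u w : V} (p : G.Walk u w) (h : ∀ z ∈ p.support, z ∈ S),
      (liftWalk p h).map (@SimpleGraph.Embedding.induce V G S).toHom = p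
  | _, _, Walk.nil, _ => rfl
  | _, _, Walk.cons ha p, h => by
      simp only [liftWalk]; erw [Walk.map_cons, liftWalk_map p]; rfl

theorem map_isShortestOddHole {G : SimpleGraph V} {v : V} {C : G.Walk v v}
    (hC : IsShortestOddHole G C) {S : Set V} (hS : {z | z ∈ C.support} ⊆ S)
    {w : S} (D : (G.induce S).Walk w w) (hD : IsShortestOddHole (G.induce S) D) :
    IsShortestOddHole G (D.map (@SimpleGraph.Embedding.induce V G S).toHom) := by
  have hinj : Function.Injective (@SimpleGraph.Embedding.induce V G S).toHom :=
    Subtype.val_injective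
  obtain ⟨⟨hcyc, hlen, hedge⟩, hodd, hshort⟩ := hD
  refine ⟨⟨hcyc.map hinj, ?_, ?_⟩, ?_, ?_⟩
  · rwa [Walk.length_map]
  · intro x y hx hy hadj
    rw [Walk.support_map, List.mem_map] at hx hy
    obtain ⟨x', hx', rfl⟩ := hx
    obtain ⟨y', hy', rfl⟩ := hy
    have := hedge x' y' hx' hy' (by exact hadj)
    erw [Walk.edges_map]
    exact List.mem_map_of_mem this
  · rwa [Walk.length_map]
  · intro u E hE hEodd
    rw [Walk.length_map]
    -- lift C into the induced graph
    have hS' : ∀ z ∈ C.support, z ∈ S := fun z hz => hS hz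
    have hlift : (liftWalk C hS').map (@SimpleGraph.Embedding.induce V G S).toHom = C :=
      liftWalk_map C hS'
    have hClen : (liftWalk C hS').length = C.length := by
      have := congrArg Walk.length hlift
      rwa [Walk.length_map] at this
    have hLiftHole : IsHole (G.induce S) (liftWalk C hS') := by
      refine ⟨?_, ?_, ?_⟩
      · rw [← Walk.map_isCycle_iff_of_injective hinj, hlift]
        exact hC.1.1
      · rw [hClen]; exact hC.1.2.1
      · intro x y hx hy hadj
        have hx' : (x : V) ∈ C.support := by
          erw [← hlift, Walk.support_map]; exact List.mem_map_of_mem hx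
        have hy' : (y : V) ∈ C.support := by
          erw [← hlift, Walk.support_map]; exact List.mem_map_of_mem hy
        have := hC.1.2.2 x y hx' hy' hadj
        erw [← hlift, Walk.edges_map] at this
        have : Sym2.map (@SimpleGraph.Embedding.induce V G S).toHom s(x, y) ∈
            List.map (Sym2.map (@SimpleGraph.Embedding.induce V G S).toHom)
              (liftWalk C hS').edges := this
        exact (List.mem_map_of_injective (Sym2.map.injective hinj)).mp this
    calc D.length ≤ (liftWalk C hS').length :=
          hshort _ _ hLiftHole (by rw [hClen]; exact hC.2.1)
      _ = C.length := hClen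
      _ ≤ E.length := hC.2.2 u E hE hEodd

/-- Lemma 2.5(2): if an induced subgraph `H` of `G` containing a shortest odd hole of `G`
is deep (contains a triple satisfying Conditions Z), then `G` is deep. -/
theorem stmt6 (G : SimpleGraph V) {v : V} (C : G.Walk v v)
    (hC : IsShortestOddHole G C)
    (S : Set V) (hS : {z | z ∈ C.support} ⊆ S)
    (hH : IsDeep (G.induce S)) : IsDeep G := by
  obtain ⟨a, b₁, b₂, b₃, T₁, T₂, T₃, hP₁, hP₂, hP₃, hl₁, hl₂, hb₁₂, hb₁₃, hb₂₃,
    hA₁₂, hA₁₃, hA₂₃, hI₁₂, hI₁₃, hI₂₃, hind, D, hD, hDsupp⟩ := hH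
  set f := (@SimpleGraph.Embedding.induce V G S).toHom with hf
  have hinj : Function.Injective f := Subtype.val_injective
  refine ⟨a, b₁, b₂, b₃, T₁.map f, T₂.map f, T₃.map f,
    Walk.map_isPath_of_injective hinj hP₁, Walk.map_isPath_of_injective hinj hP₂,
    Walk.map_isPath_of_injective hinj hP₃, ?_, ?_, ?_, ?_, ?_, hA₁₂, hA₁₃, hA₂₃,
    ?_, ?_, ?_, ?_, ?_⟩
  · erw [Walk.length_map, Walk.length_map]; exact hl₁
  · erw [Walk.length_map, Walk.length_map]; exact hl₂
  · exact fun h => hb₁₂ (hinj h)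
  · exact fun h => hb₁₃ (hinj h)
  · exact fun h => hb₂₃ (hinj h)
  · intro z hz₁ hz₂
    erw [Walk.support_map, List.mem_map] at hz₁ hz₂
    obtain ⟨z₁, hz₁, rfl⟩ := hz₁
    obtain ⟨z₂, hz₂, h⟩ := hz₂
    obtain rfl := hinj h
    exact congrArg f (hI₁₂ _ hz₁ hz₂)
  · intro z hz₁ hz₂
    erw [Walk.support_map, List.mem_map] at hz₁ hz₂
    obtain ⟨z₁, hz₁, rfl⟩ := hz₁
    obtain ⟨z₂, hz₂, h⟩ := hz₂
    obtain rfl := hinj h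
    exact congrArg f (hI₁₃ _ hz₁ hz₂)
  · intro z hz₁ hz₂
    erw [Walk.support_map, List.mem_map] at hz₁ hz₂
    obtain ⟨z₁, hz₁, rfl⟩ := hz₁
    obtain ⟨z₂, hz₂, h⟩ := hz₂
    obtain rfl := hinj h
    exact congrArg f (hI₂₃ _ hz₁ hz₂)
  · intro p q hp hq hadj
    erw [Walk.support_map, Walk.support_map, Walk.support_map] at hp hq
    simp only [List.mem_map] at hp hq
    have hp' : ∃ p' : S, (p' ∈ T₁.support ∨ p' ∈ T₂.support ∨ p' ∈ T₃.support) ∧ f p' = p := by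
      rcases hp with ⟨p', h1, h2⟩ | ⟨p', h1, h2⟩ | ⟨p', h1, h2⟩
      exacts [⟨p', Or.inl h1, h2⟩, ⟨p', Or.inr (Or.inl h1), h2⟩, ⟨p', Or.inr (Or.inr h1), h2⟩]
    have hq' : ∃ q' : S, (q' ∈ T₁.support ∨ q' ∈ T₂.support ∨ q' ∈ T₃.support) ∧ f q' = q := by
      rcases hq with ⟨q', h1, h2⟩ | ⟨q', h1, h2⟩ | ⟨q', h1, h2⟩
      exacts [⟨q', Or.inl h1, h2⟩, ⟨q', Or.inr (Or.inl h1), h2⟩, ⟨q', Or.inr (Or.inr h1), h2⟩]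
    obtain ⟨p', hp', rfl⟩ := hp'
    obtain ⟨q', hq', rfl⟩ := hq'
    have := hind p' q' hp' hq' (by exact hadj)
    have hs : s(f p', f q') = Sym2.map f s(p', q') := rfl
    rcases this with h | h | h | h | h | h
    · exact Or.inl (by erw [Walk.edges_map, hs]; exact List.mem_map_of_mem h)
    · exact Or.inr (Or.inl (by erw [Walk.edges_map, hs]; exact List.mem_map_of_mem h))
    · exact Or.inr (Or.inr (Or.inl (by erw [Walk.edges_map, hs]; exact List.mem_map_of_mem h)))
    · exact Or.inr (Or.inr (Or.inr (Or.inl (by rw [hs, h]; rfl))))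
    · exact Or.inr (Or.inr (Or.inr (Or.inr (Or.inl (by rw [hs, h]; rfl)))))
    · exact Or.inr (Or.inr (Or.inr (Or.inr (Or.inr (by rw [hs, h]; rfl)))))
  · refine ⟨D.map f, map_isShortestOddHole hC hS D hD, ?_⟩
    ext z
    simp only [Set.mem_setOf_eq, Set.mem_union]
    erw [Walk.support_map, Walk.support_map, Walk.support_map]
    simp only [List.mem_map]
    constructor
    · rintro ⟨z', hz', rfl⟩
      have : z' ∈ {z | z ∈ T₂.support} ∪ {z | z ∈ T₃.support} := hDsupp ▸ hz'
      rcases this with h | h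
      exacts [Or.inl ⟨z', h, rfl⟩, Or.inr ⟨z', h, rfl⟩]
    · rintro (⟨z', hz', rfl⟩ | ⟨z', hz', rfl⟩)
      · exact ⟨z', (Set.ext_iff.mp hDsupp z').mpr (Or.inl hz'), rfl⟩
      · exact ⟨z', (Set.ext_iff.mp hDsupp z').mpr (Or.inr hz'), rfl⟩
end

section
/- Let C be a shortest even hole of a graph G with ||C|| ≥ 24, and let u, v be vertices of C with d_C(u,v) ≤ ||C||/4 − 1. If G contains no C-bad path, then d_G(u,v) = d_C(u,v). -/
open SimpleGraph

variable {V : Type*}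

def IsShortestEvenHole (G : SimpleGraph V) {v : V} (C : G.Walk v v) : Prop :=
  IsHole G C ∧ Even C.length ∧
    ∀ (w : V) (D : G.Walk w w), IsHole G D → Even D.length → C.length ≤ D.length

/-- Distance between `a` and `b` inside the cycle `C`: the least length of a path of `C`
between them. -/
noncomputable def cycleDist (G : SimpleGraph V) {v : V} (C : G.Walk v v) (a b : V) : ℕ :=
  sInf {n | ∃ P : G.Walk a b, P.IsPath ∧ (∀ e ∈ P.edges, e ∈ C.edges) ∧ P.length = n}

/-- `P` is a `C`-bad path for the shortest even hole `C`. -/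
def IsCBad (G : SimpleGraph V) {w u v : V} (C : G.Walk w w) (P : G.Walk u v) : Prop :=
  u ≠ v ∧ ¬ G.Adj u v ∧ u ∈ C.support ∧ v ∈ C.support ∧ P.IsPath ∧
  2 ≤ P.length ∧ P.length ≤ cycleDist G C u v ∧ 4 * P.length < C.length ∧
  ∀ Q : G.Walk u v, Q.IsPath → (∀ e ∈ Q.edges, e ∈ C.edges) →
    ¬ ∃ D : G.Walk u u, IsShortestEvenHole G D ∧
        {z | z ∈ D.support} = {z | z ∈ P.support} ∪ {z | z ∈ Q.support}

/-!
If `d_G(u,v) < d_C(u,v)`, a shortest `uv`-path `P` of `G` meets every requirement of a `C`-bad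
path except (i). As `P` is not `C`-bad, `P` together with a `uv`-path `Q` of `C` spans a shortest
even hole `D`, so `‖C‖ = ‖D‖ = |V(P) ∪ V(Q)| ≤ ‖P‖ + ‖Q‖`. But a path along a cycle is one of
its two arcs, so `‖Q‖` is `d_C(u,v)` or `‖C‖ - d_C(u,v)`; either way `‖Q‖ + d_C(u,v) ≤ ‖C‖`
because `d_C(u,v) < ‖C‖/4`, and `‖P‖ < d_C(u,v)` gives the contradiction.
-/

namespace SimpleGraph.Walk

variable {G : SimpleGraph V} {u v x : V}

lemma IsPath.card_support_toFinset [DecidableEq V] {p : G.Walk u v} (hp : p.IsPath) :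
    p.support.toFinset.card = p.length + 1 := by
  rw [List.toFinset_card_of_nodup hp.support_nodup, length_support]

lemma IsCycle.card_support_toFinset [DecidableEq V] {c : G.Walk u u} (hc : c.IsCycle) :
    c.support.toFinset.card = c.length := by
  rw [← c.cons_tail_support, List.toFinset_cons,
    Finset.insert_eq_self.mpr (List.mem_toFinset.mpr (end_mem_tail_support hc.not_nil)),
    List.toFinset_card_of_nodup hc.support_nodup, List.length_tail, length_support,
    Nat.add_sub_cancel]

lemma card_support_union_le [DecidableEq V] {p q : G.Walk u v} (hp : p.IsPath) (hq : q.IsPath)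
    (huv : u ≠ v) : (p.support.toFinset ∪ q.support.toFinset).card ≤ p.length + q.length := by
  have hends : ({u, v} : Finset V) ⊆ p.support.toFinset ∩ q.support.toFinset := by
    simp [Finset.insert_subset_iff]
  have := Finset.card_le_card hends
  rw [Finset.card_pair huv] at this
  have := Finset.card_union_add_card_inter p.support.toFinset q.support.toFinset
  rw [hp.card_support_toFinset, hq.card_support_toFinset] at this
  omega

lemma IsCycle.length_le_of_support_eq_union {c : G.Walk x x} (hc : c.IsCycle) {p q : G.Walk u v}
    (hp : p.IsPath) (hq : q.IsPath) (huv : u ≠ v)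
    (h : {z | z ∈ c.support} = {z | z ∈ p.support} ∪ {z | z ∈ q.support}) :
    c.length ≤ p.length + q.length := by
  classical
  have hfin : c.support.toFinset = p.support.toFinset ∪ q.support.toFinset := by
    rw [← Finset.coe_inj, Finset.coe_union]
    simpa only [List.coe_toFinset] using h
  rw [← hc.card_support_toFinset, hfin]
  exact card_support_union_le hp hq huv

lemma length_le_of_edges_subset {p : G.Walk u v} {c : G.Walk x x} (hp : p.IsTrail)
    (hpc : ∀ e ∈ p.edges, e ∈ c.edges) : p.length ≤ c.length := by
  simpa only [length_edges] using (hp.edges_nodup.subperm hpc).length_le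

lemma IsCycle.snd_eq_or_of_edges_subset {c : G.Walk u u} (hc : c.IsCycle) {p : G.Walk u v}
    (hp : ¬ p.Nil) (hpc : ∀ e ∈ p.edges, e ∈ c.edges) : p.snd = c.snd ∨ p.snd = c.penultimate := by
  have hadj : c.toSubgraph.Adj u p.snd := adj_toSubgraph_iff_mem_edges.mpr
    (hpc _ (adj_toSubgraph_iff_mem_edges.mp (p.toSubgraph_adj_snd hp)))
  have : p.snd ∈ c.toSubgraph.neighborSet u := hadj
  simpa [hc.neighborSet_toSubgraph_endpoint] using this

/-- At an internal vertex of the cycle, the cycle edge not yet used by the path leads back to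
where the path came from, so the path has no choice but to keep following the cycle. -/
lemma IsCycle.getVert_eq_of_snd_eq {c : G.Walk u u} (hc : c.IsCycle) {p : G.Walk u v}
    (hp : p.IsPath) (hpc : ∀ e ∈ p.edges, e ∈ c.edges) (hsnd : p.snd = c.snd) :
    ∀ i ≤ p.length, p.getVert i = c.getVert i := by
  have hlen := length_le_of_edges_subset hp.isTrail hpc
  have step : ∀ i, i + 1 ≤ p.length →
      p.getVert i = c.getVert i ∧ p.getVert (i + 1) = c.getVert (i + 1) := by
    intro i
    induction i with
    | zero => exact fun _ => ⟨by simp, hsnd⟩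
    | succ k ih =>
      intro hk
      obtain ⟨hk0, hk1⟩ := ih (by omega)
      refine ⟨hk1, ?_⟩
      have hadj : c.toSubgraph.Adj (c.getVert (k + 1)) (p.getVert (k + 2)) :=
        adj_toSubgraph_iff_mem_edges.mpr (hk1 ▸ hpc _ (adj_toSubgraph_iff_mem_edges.mp
          (p.toSubgraph_adj_getVert (by omega))))
      have hmem : p.getVert (k + 2) ∈ c.toSubgraph.neighborSet (c.getVert (k + 1)) := hadj
      rw [hc.neighborSet_toSubgraph_internal (by omega) (by omega)] at hmem
      rcases hmem with hback | hfwd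
      · have := hp.getVert_injOn (by rw [Set.mem_ofPred_eq]; omega) (by rw [Set.mem_ofPred_eq]; omega) (hback.trans hk0.symm)
        omega
      · exact hfwd
  intro i hi
  rcases i with _ | i
  · simp
  · exact (step i hi).2

lemma IsCycle.getVert_length_or_of_edges_subset {c : G.Walk u u} (hc : c.IsCycle)
    {p : G.Walk u v} (hp : p.IsPath) (huv : u ≠ v) (hpc : ∀ e ∈ p.edges, e ∈ c.edges) :
    c.getVert p.length = v ∨ c.getVert (c.length - p.length) = v := by
  rcases hc.snd_eq_or_of_edges_subset (not_nil_of_ne huv) hpc with hsnd | hsnd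
  · left
    rw [← hc.getVert_eq_of_snd_eq hp hpc hsnd _ le_rfl, getVert_length]
  · right
    have hpc' : ∀ e ∈ p.edges, e ∈ c.reverse.edges := by simpa using hpc
    have := hc.reverse.getVert_eq_of_snd_eq hp hpc' (by rw [hsnd, snd_reverse]) _ le_rfl
    rw [getVert_length, getVert_reverse] at this
    exact this.symm

lemma IsCycle.length_eq_or_add_eq_of_edges_subset {c : G.Walk x x} (hc : c.IsCycle)
    (hu : u ∈ c.support) {p q : G.Walk u v} (hp : p.IsPath) (hq : q.IsPath) (huv : u ≠ v)
    (hpc : ∀ e ∈ p.edges, e ∈ c.edges) (hqc : ∀ e ∈ q.edges, e ∈ c.edges) :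
    p.length = q.length ∨ p.length + q.length = c.length := by
  classical
  rw [← c.length_rotate u hu]
  replace hpc : ∀ e ∈ p.edges, e ∈ (c.rotate u hu).edges :=
    fun e he => (c.rotate_edges u hu).mem_iff.mpr (hpc e he)
  replace hqc : ∀ e ∈ q.edges, e ∈ (c.rotate u hu).edges :=
    fun e he => (c.rotate_edges u hu).mem_iff.mpr (hqc e he)
  replace hc := hc.rotate hu
  generalize c.rotate u hu = c at hc hpc hqc
  have hp1 := length_le_of_edges_subset hp.isTrail hpc
  have hq1 := length_le_of_edges_subset hq.isTrail hqc
  have hinj : ∀ i j, i ≤ c.length → j ≤ c.length → c.getVert i = v → c.getVert j = v → i = j := by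
    intro i j hi hj hiv hjv
    have hi0 : i ≠ 0 := by rintro rfl; exact huv (by simpa using hiv)
    have hj0 : j ≠ 0 := by rintro rfl; exact huv (by simpa using hjv)
    exact hc.getVert_injOn (by rw [Set.mem_ofPred_eq]; omega) (by rw [Set.mem_ofPred_eq]; omega) (hiv.trans hjv.symm)
  rcases hc.getVert_length_or_of_edges_subset hp huv hpc with hpv | hpv <;>
  rcases hc.getVert_length_or_of_edges_subset hq huv hqc with hqv | hqv <;>
  have := hinj _ _ (by omega) (by omega) hpv hqv <;> omega

end SimpleGraph.Walk

section cycleDist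

variable {G : SimpleGraph V} {w u v : V} {C : G.Walk w w}

lemma cycleDist_self : cycleDist G C u u = 0 :=
  Nat.sInf_eq_zero.mpr (Or.inl ⟨Walk.nil, Walk.IsPath.nil, by simp, rfl⟩)

lemma cycleDist_le_length {P : G.Walk u v} (hP : P.IsPath) (hPC : ∀ e ∈ P.edges, e ∈ C.edges) :
    cycleDist G C u v ≤ P.length :=
  Nat.sInf_le ⟨P, hP, hPC, rfl⟩

lemma exists_isPath_length_eq_cycleDist (hu : u ∈ C.support) (hv : v ∈ C.support) :
    ∃ P : G.Walk u v, P.IsPath ∧ (∀ e ∈ P.edges, e ∈ C.edges) ∧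
      P.length = cycleDist G C u v := by
  classical
  let W := (C.takeUntil u hu).reverse.append (C.takeUntil v hv)
  have hW : ∀ e ∈ W.bypass.edges, e ∈ C.edges := by
    intro e he
    have he := W.edges_bypass_subset_edges he
    simp only [W, Walk.edges_append, Walk.edges_reverse, List.mem_append,
      List.mem_reverse] at he
    rcases he with he | he <;> exact Walk.edges_takeUntil_subset_edges _ _ he
  have hne : {n | ∃ P : G.Walk u v, P.IsPath ∧ (∀ e ∈ P.edges, e ∈ C.edges) ∧
      P.length = n}.Nonempty := ⟨_, W.bypass, W.bypass_isPath, hW, rfl⟩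
  exact Nat.sInf_mem hne

lemma IsHole.cycleDist_le_one_of_adj (hC : IsHole G C) (hu : u ∈ C.support)
    (hv : v ∈ C.support) (huv : G.Adj u v) : cycleDist G C u v ≤ 1 :=
  cycleDist_le_length (Walk.IsPath.of_adj huv) (by simpa using hC.2.2 u v hu hv huv)

end cycleDist

theorem stmt8_general (G : SimpleGraph V) {w : V} (C : G.Walk w w)
    (hC : IsShortestEvenHole G C)
    (u v : V) (hu : u ∈ C.support) (hv : v ∈ C.support)
    (hd : 4 * cycleDist G C u v + 4 ≤ C.length)
    (hgood : ∀ (a b : V) (P : G.Walk a b), ¬ IsCBad G C P) :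
    G.dist u v = cycleDist G C u v := by
  rcases eq_or_ne u v with rfl | huv
  · rw [dist_self, cycleDist_self]
  obtain ⟨R, hR, hRC, hRlen⟩ := exists_isPath_length_eq_cycleDist hu hv
  refine le_antisymm (hRlen ▸ dist_le R) (not_lt.mp fun hlt => ?_)
  obtain ⟨P, hP, hPlen⟩ := R.reachable.exists_path_of_dist
  have hpos := R.reachable.pos_dist_of_ne huv
  have hnadj : ¬ G.Adj u v := fun h => by
    have := hC.1.cycleDist_le_one_of_adj hu hv h
    omega
  have htwo : 2 ≤ P.length := by
    have : G.dist u v ≠ 1 := dist_eq_one_iff_adj.not.mpr hnadj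
    omega
  refine hgood u v P ⟨huv, hnadj, hu, hv, hP, htwo, by omega, by omega,
    fun Q hQ hQC ⟨D, hD, hDsupp⟩ => ?_⟩
  have harcs := hC.1.1.length_eq_or_add_eq_of_edges_subset hu hQ hR huv hQC hRC
  have hD_le := hD.1.1.length_le_of_support_eq_union hP hQ huv hDsupp
  have hC_le := hC.2.2 u D hD.1 hD.2.1
  omega

/-- Statement (2) in the proof of Lemma 4.12: if `G` has no `C`-bad path and
`d_C(u,v) ≤ ‖C‖/4 − 1`, then `d_G(u,v) = d_C(u,v)`. -/
theorem stmt8 (G : SimpleGraph V) {w : V} (C : G.Walk w w)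
    (hC : IsShortestEvenHole G C) (h24 : 24 ≤ C.length)
    (u v : V) (hu : u ∈ C.support) (hv : v ∈ C.support)
    (hd : 4 * cycleDist G C u v + 4 ≤ C.length)
    (hgood : ∀ (a b : V) (P : G.Walk a b), ¬ IsCBad G C P) :
    G.dist u v = cycleDist G C u v :=
  stmt8_general G C hC u v hu hv hd hgood
end

section
/- Let C be a shortest even hole of a graph G with ||C|| ≥ 24 such that G contains no C-bad path. If u and v are vertices of C with d_C(u,v) > ||C||/4 + c for appropriate slack (precisely, d_C(u,v) > 2ℓ + r₁ + r₃ where ||C|| = 8ℓ + 2(r₁+r₂+r₃) with r₁ ≥ r₂ ≥ r₃ in {0,1}), then d_G(u,v) ≥ 2ℓ + r₁ + r₃. -/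
open SimpleGraph

variable {V : Type*}

/-!
Suppose `d_G(u,v) < 2ℓ + r₁ + r₃` and let `P` be a shortest `uv`-path. Since `C` is a hole and
`d_C(u,v) > 2ℓ + r₁ + r₃ ≥ d_G(u,v)`, the vertices `u, v` are distinct and nonadjacent, so
`2 ≤ ‖P‖ < d_C(u,v)` and `4‖P‖ < ‖C‖`. As `C` is good, `P` is not `C`-bad, so some arc `Q` of `C`
from `u` to `v` spans with `P` a shortest even hole `D`. Then
`‖C‖ ≤ ‖D‖ ≤ ‖P‖ + ‖Q‖ < d_C(u,v) + ‖Q‖ ≤ ‖C‖`, because the complementary arc of `Q` has length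
`‖C‖ - ‖Q‖`.
-/

namespace SimpleGraph.Walk

variable {G : SimpleGraph V} {w u v : V}

lemma IsCycle.eq_or_eq_of_mem_edges {C : G.Walk w w} (hC : C.IsCycle) {x a b c : V}
    (hab : a ≠ b) (ha : s(x, a) ∈ C.edges) (hb : s(x, b) ∈ C.edges) (hc : s(x, c) ∈ C.edges) :
    c = a ∨ c = b := by
  have hN := hC.ncard_neighborSet_toSubgraph_eq_two (C.fst_mem_support_of_mem_edges ha)
  have hmem : ∀ y, s(x, y) ∈ C.edges → y ∈ C.toSubgraph.neighborSet x :=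
    fun y hy => C.mem_edges_toSubgraph.mpr hy
  have heq : {a, b} = C.toSubgraph.neighborSet x :=
    Set.eq_of_subset_of_ncard_le (Set.insert_subset (hmem a ha) (by simpa using hmem b hb))
      (by rw [hN, Set.ncard_pair hab]) (Set.finite_of_ncard_ne_zero (by omega))
  simpa [← heq] using hmem c hc

lemma IsCycle.eq_of_snd_eq {C : G.Walk w w} (hC : C.IsCycle) {p q : G.Walk u v}
    (hp : p.IsPath) (hq : q.IsPath) (hpC : p.edges ⊆ C.edges) (hqC : q.edges ⊆ C.edges)
    (huv : u ≠ v) (hsnd : p.snd = q.snd) : p = q := by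
  induction p with
  | nil => exact absurd rfl huv
  | @cons u x v h p ih =>
    cases q with
    | nil => exact absurd rfl huv
    | cons h' q =>
      obtain rfl : x = _ := by simpa using hsnd
      rw [cons_isPath_iff] at hp hq
      by_cases hxv : x = v
      · subst hxv
        rw [(isPath_iff_nil.mp hp.1).eq_nil, (isPath_iff_nil.mp hq.1).eq_nil]
      have hpx : s(x, p.snd) ∈ p.edges := mk_start_snd_mem_edges (not_nil_of_ne hxv)
      have hqx : s(x, q.snd) ∈ q.edges := mk_start_snd_mem_edges (not_nil_of_ne hxv)
      have hux : s(x, u) ∈ C.edges := Sym2.eq_swap ▸ hpC (by simp)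
      have hup : u ≠ p.snd := fun h => hp.2 (h ▸ p.snd_mem_support_of_mem_edges hpx)
      rcases hC.eq_or_eq_of_mem_edges hup hux (hpC (List.mem_cons_of_mem _ hpx))
          (hqC (List.mem_cons_of_mem _ hqx)) with h | h
      · exact absurd (h ▸ q.snd_mem_support_of_mem_edges hqx) hq.2
      · rw [ih hp.1 hq.1 (fun e he => hpC (List.mem_cons_of_mem _ he))
          (fun e he => hqC (List.mem_cons_of_mem _ he)) hxv h.symm]

lemma IsCycle.exists_isPath_length_add_eq_of_snd_eq [DecidableEq V] {C : G.Walk u u}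
    (hC : C.IsCycle) (hv : v ∈ C.support) (huv : u ≠ v) {q : G.Walk u v} (hq : q.IsPath)
    (hqC : q.edges ⊆ C.edges) (hsnd : q.snd = C.snd) :
    ∃ q' : G.Walk u v, q'.IsPath ∧ q'.edges ⊆ C.edges ∧ q.length + q'.length = C.length := by
  obtain rfl : q = C.takeUntil v hv :=
    hC.eq_of_snd_eq hq (hC.isPath_takeUntil hv) hqC (C.edges_takeUntil_subset_edges hv) huv
      (by rw [hsnd, snd_takeUntil huv.symm])
  have hspec := C.take_spec hv
  refine ⟨(C.dropUntil v hv).reverse, ?_, ?_, ?_⟩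
  · exact ((hspec ▸ hC).isPath_of_append_right (not_nil_of_ne huv)).reverse
  · simpa [edges_reverse] using C.edges_dropUntil_subset_edges hv
  · rw [length_reverse, ← length_append, hspec]

lemma IsCycle.exists_isPath_length_add_eq [DecidableEq V] {C : G.Walk w w} (hC : C.IsCycle)
    (hu : u ∈ C.support) (hv : v ∈ C.support) (huv : u ≠ v) {q : G.Walk u v} (hq : q.IsPath)
    (hqC : q.edges ⊆ C.edges) :
    ∃ q' : G.Walk u v, q'.IsPath ∧ q'.edges ⊆ C.edges ∧ q.length + q'.length = C.length := by
  -- The two `C`-neighbours of `u` are the second and penultimate vertices of `C` rotated to `u`.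
  obtain ⟨C', hC', hE, hlen, hv', hsnd⟩ : ∃ C' : G.Walk u u, C'.IsCycle ∧
      (∀ e, e ∈ C'.edges ↔ e ∈ C.edges) ∧ C'.length = C.length ∧ v ∈ C'.support ∧
      q.snd = C'.snd := by
    set C₁ := C.rotate u hu
    have hE₁ : ∀ e, e ∈ C₁.edges ↔ e ∈ C.edges := fun e => (C.rotate_edges u hu).mem_iff
    have hv₁ : v ∈ C₁.support := (C.mem_support_rotate_iff u hu).mpr hv
    have hnb : q.snd ∈ C₁.toSubgraph.neighborSet u :=
      C₁.mem_edges_toSubgraph.mpr ((hE₁ _).mpr (hqC (mk_start_snd_mem_edges (not_nil_of_ne huv))))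
    rw [(hC.rotate hu).neighborSet_toSubgraph_endpoint] at hnb
    rcases hnb with h | h
    · exact ⟨C₁, hC.rotate hu, hE₁, by simp [C₁], hv₁, h⟩
    · exact ⟨C₁.reverse, (hC.rotate hu).reverse, by simpa [edges_reverse] using hE₁,
        by simp [C₁], by simpa using hv₁, by rw [snd_reverse]; exact h⟩
  obtain ⟨q', hq', hq'C, hlen'⟩ := hC'.exists_isPath_length_add_eq_of_snd_eq hv' huv hq
    (fun e he => (hE e).mpr (hqC he)) hsnd
  exact ⟨q', hq', fun e he => (hE e).mp (hq'C he), hlen'.trans hlen⟩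

lemma IsCycle.length_le_length_add_length [DecidableEq V] {D : G.Walk w w} (hD : D.IsCycle)
    {p q : G.Walk u v} (hp : p.IsPath) (hq : q.IsPath) (huv : u ≠ v)
    (hsub : ∀ z ∈ D.support, z ∈ p.support ∨ z ∈ q.support) :
    D.length ≤ p.length + q.length := by
  have hends : ({u, v} : Finset V) ⊆ p.support.toFinset ∩ q.support.toFinset := by
    simp [Finset.insert_subset_iff]
  have hunion := Finset.card_union_add_card_inter p.support.toFinset q.support.toFinset
  have hinter := (Finset.card_pair huv).symm.trans_le (Finset.card_le_card hends)
  rw [List.toFinset_card_of_nodup hp.support_nodup, List.toFinset_card_of_nodup hq.support_nodup,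
    length_support, length_support] at hunion
  calc D.length = D.support.tail.toFinset.card := by
        rw [List.toFinset_card_of_nodup hD.support_nodup, List.length_tail, length_support]; rfl
    _ ≤ (p.support.toFinset ∪ q.support.toFinset).card := Finset.card_le_card fun z hz => by
        simpa using hsub z (List.mem_of_mem_tail (List.mem_toFinset.mp hz))
    _ ≤ p.length + q.length := by omega

end SimpleGraph.Walk

section cycleDist

variable {G : SimpleGraph V} {w u v : V} {C : G.Walk w w}

lemma cycleDist_le_length_s9 {p : G.Walk u v} (hp : p.IsPath) (hpC : p.edges ⊆ C.edges) :
    cycleDist G C u v ≤ p.length :=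
  Nat.sInf_le ⟨p, hp, hpC, rfl⟩

lemma cycleDist_add_length_le [DecidableEq V] (hC : C.IsCycle) (hu : u ∈ C.support)
    (hv : v ∈ C.support) (huv : u ≠ v) {q : G.Walk u v} (hq : q.IsPath)
    (hqC : q.edges ⊆ C.edges) : cycleDist G C u v + q.length ≤ C.length := by
  obtain ⟨q', hq', hq'C, hlen⟩ := hC.exists_isPath_length_add_eq hu hv huv hq hqC
  have := cycleDist_le_length_s9 hq' hq'C
  omega

lemma IsHole.ne_and_not_adj_of_one_lt_cycleDist (hC : IsHole G C) (hu : u ∈ C.support)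
    (hv : v ∈ C.support) (hd : 1 < cycleDist G C u v) : u ≠ v ∧ ¬ G.Adj u v := by
  refine ⟨?_, fun h => ?_⟩
  · rintro rfl
    have := cycleDist_le_length_s9 (C := C) (Walk.IsPath.nil (u := u)) (by simp)
    rw [Walk.length_nil] at this
    omega
  · have := cycleDist_le_length_s9 (C := C) (Adj.isPath_toWalk h)
      (by simpa [Adj.edges_toWalk] using hC.2.2 u v hu hv h)
    rw [Adj.length_toWalk] at this
    omega

end cycleDist

theorem stmt9_general (G : SimpleGraph V) {w : V} (C : G.Walk w w)
    (hC : IsShortestEvenHole G C)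
    (r₁ r₂ r₃ ℓ : ℕ) (hr₁ : r₁ ≤ 1) (hr₃ : r₃ ≤ r₂)
    (hlen : C.length = 8 * ℓ + 2 * (r₁ + r₂ + r₃))
    (u v : V) (hu : u ∈ C.support) (hv : v ∈ C.support)
    (hd : 2 * ℓ + r₁ + r₃ < cycleDist G C u v)
    (hgood : ∀ (a b : V) (P : G.Walk a b), ¬ IsCBad G C P) :
    2 * ℓ + r₁ + r₃ ≤ G.dist u v := by
  classical
  by_contra! hlt
  obtain ⟨hhole, -, hshortest⟩ := hC
  obtain ⟨P, hP, hPlen⟩ := (C.takeUntil u hu).reverse.append (C.takeUntil v hv)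
    |>.reachable.exists_path_of_dist
  obtain ⟨hne, hnadj⟩ := hhole.ne_and_not_adj_of_one_lt_cycleDist hu hv (by omega)
  have hP2 : 2 ≤ P.length := by
    by_contra!
    interval_cases h : P.length
    exacts [hne (Walk.eq_of_length_eq_zero h), hnadj (Walk.adj_of_length_eq_one h)]
  refine hgood u v P ⟨hne, hnadj, hu, hv, hP, hP2, by omega, by omega, ?_⟩
  rintro Q hQ hQC ⟨D, ⟨hDhole, hDeven, -⟩, hDsupp⟩
  have hCD := hshortest u D hDhole hDeven
  have hDPQ := hDhole.1.length_le_length_add_length hP hQ hne fun z hz => by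
    simpa using (Set.ext_iff.mp hDsupp z).mp hz
  have hCQ := cycleDist_add_length_le hhole.1 hu hv hne hQ hQC
  omega

/-- Statement (1) in the proof of Lemma 4.12: if `G` has no `C`-bad path and
`d_C(u,v) > 2ℓ + r₁ + r₃`, then `d_G(u,v) ≥ 2ℓ + r₁ + r₃`. -/
theorem stmt9 (G : SimpleGraph V) {w : V} (C : G.Walk w w)
    (hC : IsShortestEvenHole G C)
    (r₁ r₂ r₃ ℓ : ℕ) (hr₁ : r₁ ≤ 1) (hr₂ : r₂ ≤ r₁) (hr₃ : r₃ ≤ r₂) (hℓ : 2 ≤ ℓ)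
    (hlen : C.length = 8 * ℓ + 2 * (r₁ + r₂ + r₃))
    (u v : V) (hu : u ∈ C.support) (hv : v ∈ C.support)
    (hd : 2 * ℓ + r₁ + r₃ < cycleDist G C u v)
    (hgood : ∀ (a b : V) (P : G.Walk a b), ¬ IsCBad G C P) :
    2 * ℓ + r₁ + r₃ ≤ G.dist u v :=
  stmt9_general G C hC r₁ r₂ r₃ ℓ hr₁ hr₃ hlen u v hu hv hd hgood
end

section
/- Let G be a graph, and suppose that for every shortest even hole C of G there is a vertex v ∈ V(C) with J_G(C) ⊆ N_G(v), or G[J_G(C)] is a clique disjoint from C. Then the family consisting of the sets N_G(v) ∖ {u,w} over all 2-edge paths u v w of G, together with the vertex sets of all maximal cliques of G, has the property that some shortest even hole C of G is clear (J_{G−X}(C) = ∅ and C ⊆ G − X) in G − X for at least one set X in the family. -/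
open SimpleGraph

variable {V : Type*}

/-- `J_G(C)`: vertices `x` such that `N_G(x) ∩ V(C)` contains three pairwise
non-adjacent vertices. -/
def JSet (G : SimpleGraph V) {v : V} (C : G.Walk v v) : Set V :=
  {x | ∃ a b c : V, a ≠ b ∧ a ≠ c ∧ b ≠ c ∧
    ¬ G.Adj a b ∧ ¬ G.Adj a c ∧ ¬ G.Adj b c ∧
    a ∈ C.support ∧ b ∈ C.support ∧ c ∈ C.support ∧
    G.Adj x a ∧ G.Adj x b ∧ G.Adj x c}

/-!
A vertex of a hole has exactly two neighbours on it, so it never lies in `J(C)`. If some vertex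
`x` of `C` is complete to `J(C)`, deleting `N(x)` minus the two hole-neighbours of `x` keeps `C`
and removes `J(C)`. Otherwise `J(C)` is a clique, and every maximal clique containing it avoids
`C`: a vertex of `C` in such a clique would be complete to `J(C)`.
-/

section

variable {G : SimpleGraph V}

theorem SimpleGraph.IsClique.exists_maximal_superset {s : Set V} (hs : G.IsClique s) :
    ∃ K, s ⊆ K ∧ Maximal G.IsClique K :=
  zorn_subset_nonempty {t | G.IsClique t}
    (fun c hc hchain _ =>
      ⟨⋃₀ c, (isClique_sUnion hchain.directedOn).2 hc, fun _ => Set.subset_sUnion_of_mem⟩)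
    s hs

namespace IsHole

variable {v x : V} {C : G.Walk v v}

theorem neighborSet_inter_support (hC : IsHole G C) (hx : x ∈ C.support) :
    G.neighborSet x ∩ {z | z ∈ C.support} = C.toSubgraph.neighborSet x := by
  ext z
  rw [Subgraph.mem_neighborSet, ← Subgraph.mem_edgeSet, Walk.mem_edges_toSubgraph]
  constructor
  · rintro ⟨hxz, hz⟩
    exact hC.2.2 x z hx hz hxz
  · intro he
    exact ⟨C.adj_of_mem_edges he, C.snd_mem_support_of_mem_edges he⟩

theorem exists_neighbors_on_hole (hC : IsHole G C) (hx : x ∈ C.support) :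
    ∃ u w, u ≠ w ∧ G.neighborSet x ∩ {z | z ∈ C.support} = {u, w} := by
  rw [hC.neighborSet_inter_support hx]
  exact Set.ncard_eq_two.mp (hC.1.ncard_neighborSet_toSubgraph_eq_two hx)

theorem notMem_jSet (hC : IsHole G C) (hx : x ∈ C.support) : x ∉ JSet G C := by
  obtain ⟨u, w, -, hN⟩ := hC.exists_neighbors_on_hole hx
  rintro ⟨a, b, c, hab, hac, hbc, -, -, -, ha, hb, hc, hxa, hxb, hxc⟩
  have onHole : ∀ y ∈ C.support, G.Adj x y → y = u ∨ y = w := fun y hy hxy =>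
    (hN ▸ ⟨hxy, hy⟩ : y ∈ ({u, w} : Set V))
  rcases onHole a ha hxa with rfl | rfl <;> rcases onHole b hb hxb with rfl | rfl <;>
    rcases onHole c hc hxc with rfl | rfl <;> simp_all

theorem exists_twoPath_clearing (hC : IsHole G C) (hx : x ∈ C.support)
    (hJ : JSet G C ⊆ G.neighborSet x) :
    ∃ u w, G.Adj u x ∧ G.Adj x w ∧ u ≠ w ∧
      (∀ z ∈ C.support, z ∉ G.neighborSet x \ {u, w}) ∧ JSet G C ⊆ G.neighborSet x \ {u, w} := by
  obtain ⟨u, w, huw, hN⟩ := hC.exists_neighbors_on_hole hx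
  have hu : u ∈ G.neighborSet x ∩ {z | z ∈ C.support} := hN ▸ Set.mem_insert u {w}
  have hw : w ∈ G.neighborSet x ∩ {z | z ∈ C.support} := hN ▸ Set.mem_insert_of_mem u rfl
  refine ⟨u, w, hu.1.symm, hw.1, huw, fun z hz hzX => hzX.2 ?_, fun j hj => ⟨hJ hj, ?_⟩⟩
  · exact hN ▸ ⟨hzX.1, hz⟩
  · rintro (rfl | rfl)
    exacts [hC.notMem_jSet hu.2 hj, hC.notMem_jSet hw.2 hj]

theorem exists_maximal_clique_clearing (hC : IsHole G C) (hJ : G.IsClique (JSet G C))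
    (hno : ∀ x ∈ C.support, ¬ JSet G C ⊆ G.neighborSet x) :
    ∃ K, Maximal G.IsClique K ∧ (∀ z ∈ C.support, z ∉ K) ∧ JSet G C ⊆ K := by
  obtain ⟨K, hJK, hK⟩ := hJ.exists_maximal_superset
  refine ⟨K, hK, fun z hz hzK => hno z hz fun j hj => ?_, hJK⟩
  exact hK.1 hzK (hJK hj) fun hzj => hC.notMem_jSet hz (hzj ▸ hj)

end IsHole

end

theorem stmt11_general (G : SimpleGraph V)
    (hex : ∃ (w : V) (C : G.Walk w w), IsShortestEvenHole G C)
    (hhyp : ∀ (w : V) (C : G.Walk w w), IsShortestEvenHole G C →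
      (∃ x ∈ C.support, JSet G C ⊆ G.neighborSet x) ∨
      (G.IsClique (JSet G C) ∧ ∀ z ∈ C.support, z ∉ JSet G C)) :
    ∃ (w : V) (C : G.Walk w w) (X : Set V),
      IsShortestEvenHole G C ∧
      ((∃ u x w' : V, G.Adj u x ∧ G.Adj x w' ∧ u ≠ w' ∧
          X = G.neighborSet x \ {u, w'}) ∨
       (∃ K : Set V, G.IsClique K ∧ (∀ K', G.IsClique K' → K ⊆ K' → K' = K) ∧
          X = K)) ∧
      (∀ z ∈ C.support, z ∉ X) ∧ JSet G C ⊆ X := by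
  obtain ⟨w, C, hC⟩ := hex
  by_cases hcomplete : ∃ x ∈ C.support, JSet G C ⊆ G.neighborSet x
  · obtain ⟨x, hx, hJ⟩ := hcomplete
    obtain ⟨u, w', hux, hxw', huw', hclear⟩ := hC.1.exists_twoPath_clearing hx hJ
    exact ⟨w, C, _, hC, Or.inl ⟨u, x, w', hux, hxw', huw', rfl⟩, hclear⟩
  · have hJ : G.IsClique (JSet G C) := (hhyp w C hC).resolve_left hcomplete |>.1
    obtain ⟨K, hK, hclear⟩ := hC.1.exists_maximal_clique_clearing hJ
      fun x hx hJx => hcomplete ⟨x, hx, hJx⟩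
    exact ⟨w, C, K, hC, Or.inr ⟨K, hK.1, fun K' hK' hKK' => (hK.eq_of_subset hK' hKK').symm, rfl⟩,
      hclear⟩

/-- Correctness of Lemma 4.1: some shortest even hole of `G` is clear in `G − X` for a
set `X` in the family of punctured neighborhoods of 2-paths and of maximal cliques. -/
theorem stmt11 [Fintype V] (G : SimpleGraph V)
    (hex : ∃ (w : V) (C : G.Walk w w), IsShortestEvenHole G C)
    (hhyp : ∀ (w : V) (C : G.Walk w w), IsShortestEvenHole G C →
      (∃ x ∈ C.support, JSet G C ⊆ G.neighborSet x) ∨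
      (G.IsClique (JSet G C) ∧ ∀ z ∈ C.support, z ∉ JSet G C)) :
    ∃ (w : V) (C : G.Walk w w) (X : Set V),
      IsShortestEvenHole G C ∧
      ((∃ u x w' : V, G.Adj u x ∧ G.Adj x w' ∧ u ≠ w' ∧
          X = G.neighborSet x \ {u, w'}) ∨
       (∃ K : Set V, G.IsClique K ∧ (∀ K', G.IsClique K' → K ⊆ K' → K' = K) ∧
          X = K)) ∧
      (∀ z ∈ C.support, z ∉ X) ∧ JSet G C ⊆ X :=
  stmt11_general G hex hhyp
end
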